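/- Let A_1, …, A_m be a finite measurable partition of M into pairwise disjoint sets, and suppose that for each j there is a constant d_j ∈ ℝ^n with d(X, τ) = d_j for all X ∈ S(A_j). Then for every t ∈ ℝ and all components a, b ∈ {1, …, n}: ∑_{j=1}^m [ d_{j,a} T_t(A_j)_b + T_t(A_j)_a d_{j,b} + ν(A_j) d_{j,a} d_{j,b} ] = ∫_M d_a(X, t+τ) d_b(X, t+τ) dν(X) − ∫_M d_a(X, t) d_b(X, t) dν(X). (This exact identity for the growth of the second moment of the displacement is the finite-time content of the fundamental sum rule Eq. (sumrule*) of the paper.) -/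

import Mathlib

open MeasureTheory

/-! With `u Y := d(S Y, τ)` the jump over one period and `v Y := d(Y, t)`, the cocycle identity
reads `d(S Y, t + τ) = u Y + v Y`. Since `S` preserves `ν`, the second moment at time `t + τ` is
`∫ (u + v)_a (u + v)_b`, so the increment is `∫ (u_a u_b + u_a v_b + v_a u_b)`. Splitting this
integral over the partition, `u` is the constant `d_j` on `A_j`, which gives the `j`-th summand. -/

namespace MeasureTheory

variable {α β : Type*} [MeasurableSpace α] [MeasurableSpace β] {μ : Measure α} {ν : Measure β}

theorem MeasurePreserving.integral_comp_of_aestronglyMeasurable {E : Type*}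
    [NormedAddCommGroup E] [NormedSpace ℝ E] {f : α → β} (hf : MeasurePreserving f μ ν)
    {g : β → E} (hg : AEStronglyMeasurable g ν) :
    ∫ x, g (f x) ∂μ = ∫ y, g y ∂ν := by
  rw [← hf.map_eq] at hg ⊢
  exact (integral_map hf.aemeasurable hg).symm

theorem memLp_apply_of_bound [IsFiniteMeasure μ] {ι E : Type*} [Fintype ι]
    [NormedAddCommGroup E] {f : α → ι → E} (hf : AEStronglyMeasurable f μ) {C : ℝ}
    (hC : ∀ x, ‖f x‖ ≤ C) (p : ENNReal) (i : ι) : MemLp (fun x => f x i) p μ :=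
  (MemLp.of_bound hf C (ae_of_all _ hC)).eval i

theorem integral_eq_sum_setIntegral_of_iUnion_eq_univ {ι E : Type*} [Fintype ι]
    [NormedAddCommGroup E] [NormedSpace ℝ E] {A : ι → Set α} (hA : ∀ i, MeasurableSet (A i))
    (hAdisj : Pairwise (Function.onFun Disjoint A)) (hAcover : ⋃ i, A i = Set.univ)
    {f : α → E} (hf : Integrable f μ) :
    ∫ x, f x ∂μ = ∑ i, ∫ x in A i, f x ∂μ := by
  rw [← integral_iUnion_fintype hA hAdisj fun i => hf.integrableOn, hAcover, Measure.restrict_univ]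

theorem integral_add_mul_add_sub_integral_mul {f₁ f₂ g₁ g₂ : α → ℝ} (hf₁ : MemLp f₁ 2 μ)
    (hf₂ : MemLp f₂ 2 μ) (hg₁ : MemLp g₁ 2 μ) (hg₂ : MemLp g₂ 2 μ) :
    ∫ x, (f₁ x + g₁ x) * (f₂ x + g₂ x) ∂μ - ∫ x, g₁ x * g₂ x ∂μ
      = ∫ x, (f₁ x * f₂ x + f₁ x * g₂ x + g₁ x * f₂ x) ∂μ := by
  have hsum : Integrable (fun x => (f₁ x + g₁ x) * (f₂ x + g₂ x)) μ :=
    (hf₁.add hg₁).integrable_mul (hf₂.add hg₂)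
  have hprod : Integrable (fun x => g₁ x * g₂ x) μ := hg₁.integrable_mul hg₂
  rw [← integral_sub hsum hprod]
  exact integral_congr_ae (ae_of_all _ fun x => by ring)

theorem setIntegral_mul_add_of_eq_const [IsFiniteMeasure μ] {s : Set α} (hs : MeasurableSet s)
    {f₁ f₂ g₁ g₂ : α → ℝ} {c₁ c₂ : ℝ} (hf₁ : ∀ x ∈ s, f₁ x = c₁) (hf₂ : ∀ x ∈ s, f₂ x = c₂)
    (hg₁ : IntegrableOn g₁ s μ) (hg₂ : IntegrableOn g₂ s μ) :
    ∫ x in s, (f₁ x * f₂ x + f₁ x * g₂ x + g₁ x * f₂ x) ∂μ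
      = c₁ * ∫ x in s, g₂ x ∂μ + (∫ x in s, g₁ x ∂μ) * c₂ + μ.real s * c₁ * c₂ := by
  have hconst : IntegrableOn (fun _ => c₁ * c₂) s μ := integrableOn_const
  have hleft : IntegrableOn (fun x => c₁ * c₂ + c₁ * g₂ x) s μ := hconst.add (hg₂.const_mul c₁)
  rw [setIntegral_congr_fun hs (g := fun x => c₁ * c₂ + c₁ * g₂ x + g₁ x * c₂)
      fun x hx => by simp only [hf₁ x hx, hf₂ x hx],
    integral_add hleft (hg₁.mul_const c₂), integral_add hconst (hg₂.const_mul c₁),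
    setIntegral_const, integral_const_mul, integral_mul_const, smul_eq_mul]
  ring

end MeasureTheory

theorem second_moment_growth_identity_general {M : Type*} [MeasurableSpace M]
    (ν : Measure M) [IsFiniteMeasure ν]
    {n : ℕ} (d : M → ℝ → Fin n → ℝ)
    (hdmeas : ∀ s : ℝ, Measurable fun X => d X s)
    (hdbd : ∀ s : ℝ, ∃ C : ℝ, ∀ X : M, ‖d X s‖ ≤ C)
    (S : M ≃ M) (hS : MeasurePreserving S ν ν)
    (τ : ℝ)
    (hcocycle : ∀ (X : M) (t : ℝ), d X (t + τ) = d X τ + d (S.symm X) t)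
    (m : ℕ) (A : Fin m → Set M)
    (hAmeas : ∀ j, MeasurableSet (A j))
    (hAdisj : ∀ i j, i ≠ j → Disjoint (A i) (A j))
    (hAcover : (⋃ j, A j) = Set.univ)
    (dj : Fin m → Fin n → ℝ)
    (hdj : ∀ j, ∀ X ∈ S '' A j, d X τ = dj j) :
    ∀ (t : ℝ) (a b : Fin n),
      (∑ j, (dj j a * (∫ X in A j, d X t b ∂ν)
              + (∫ X in A j, d X t a ∂ν) * dj j b
              + (ν (A j)).toReal * dj j a * dj j b))
        = (∫ X, d X (t + τ) a * d X (t + τ) b ∂ν)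
            - ∫ X, d X t a * d X t b ∂ν := by
  intro t a b
  have hd (s : ℝ) (c : Fin n) : MemLp (fun X => d X s c) 2 ν :=
    memLp_apply_of_bound (hdmeas s).aestronglyMeasurable (hdbd s).choose_spec 2 c
  have hjump (c : Fin n) : MemLp (fun Y => d (S Y) τ c) 2 ν := (hd τ c).comp_measurePreserving hS
  have hshift (Y : M) : d (S Y) (t + τ) = d (S Y) τ + d Y t := by
    simpa using hcocycle (S Y) t
  calc _ = ∑ j, ∫ Y in A j, (d (S Y) τ a * d (S Y) τ b + d (S Y) τ a * d Y t b
              + d Y t a * d (S Y) τ b) ∂ν := by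
        refine Finset.sum_congr rfl fun j _ => ?_
        have hjump_eq (Y) (hY : Y ∈ A j) : d (S Y) τ = dj j := hdj j (S Y) ⟨Y, hY, rfl⟩
        rw [setIntegral_mul_add_of_eq_const (hAmeas j) (fun Y hY => congrFun (hjump_eq Y hY) a)
          (fun Y hY => congrFun (hjump_eq Y hY) b) ((hd t a).integrable one_le_two).integrableOn
          ((hd t b).integrable one_le_two).integrableOn, measureReal_def]
    _ = ∫ Y, (d (S Y) τ a + d Y t a) * (d (S Y) τ b + d Y t b) ∂ν - ∫ X, d X t a * d X t b ∂ν := by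
        rw [integral_add_mul_add_sub_integral_mul (hjump a) (hjump b) (hd t a) (hd t b),
          ← integral_eq_sum_setIntegral_of_iUnion_eq_univ hAmeas hAdisj hAcover]
        exact (((hjump a).integrable_mul (hjump b)).add ((hjump a).integrable_mul (hd t b))).add
          ((hd t a).integrable_mul (hjump b))
    _ = _ := by
        have hprod : Integrable (fun X => d X (t + τ) a * d X (t + τ) b) ν :=
          (hd _ a).integrable_mul (hd _ b)
        rw [← hS.integral_comp_of_aestronglyMeasurable hprod.aestronglyMeasurable]
        simp only [hshift, Pi.add_apply]

/-- exact identity for the growth of the second moment of the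
displacement (finite-time content of the fundamental sum rule):
`∑_j [ d_{j,a} T_t(A_j)_b + T_t(A_j)_a d_{j,b} + ν(A_j) d_{j,a} d_{j,b} ]
  = ∫_M d_a(X,t+τ) d_b(X,t+τ) dν − ∫_M d_a(X,t) d_b(X,t) dν`,
where `T_t(A)_a = ∫_A d_a(X,t) dν`. -/
theorem second_moment_growth_identity {M : Type*} [MeasurableSpace M]
    (ν : Measure M) [IsFiniteMeasure ν] (hν : 0 < ν Set.univ)
    {n : ℕ} (hn : 1 ≤ n) (d : M → ℝ → Fin n → ℝ)
    (hdmeas : ∀ s : ℝ, Measurable fun X => d X s)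
    (hdbd : ∀ s : ℝ, ∃ C : ℝ, ∀ X : M, ‖d X s‖ ≤ C)
    (S : M ≃ M) (hS : MeasurePreserving S ν ν) (hS' : MeasurePreserving S.symm ν ν)
    (τ : ℝ)
    (hcocycle : ∀ (X : M) (t : ℝ), d X (t + τ) = d X τ + d (S.symm X) t)
    (m : ℕ) (A : Fin m → Set M)
    (hAmeas : ∀ j, MeasurableSet (A j))
    (hAdisj : ∀ i j, i ≠ j → Disjoint (A i) (A j))
    (hAcover : (⋃ j, A j) = Set.univ)
    (dj : Fin m → Fin n → ℝ)
    (hdj : ∀ j, ∀ X ∈ S '' A j, d X τ = dj j) :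
    ∀ (t : ℝ) (a b : Fin n),
      (∑ j, (dj j a * (∫ X in A j, d X t b ∂ν)
              + (∫ X in A j, d X t a ∂ν) * dj j b
              + (ν (A j)).toReal * dj j a * dj j b))
        = (∫ X, d X (t + τ) a * d X (t + τ) b ∂ν)
            - ∫ X, d X t a * d X t b ∂ν :=
  second_moment_growth_identity_general ν d hdmeas hdbd S hS τ hcocycle m A hAmeas hAdisj hAcover dj
    hdj
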